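/- arXiv:2507.11313 — 5 statements merged into one kernel-verified Lean document; each statement's English description precedes it below -/
import Mathlib

section
/- Let n ≥ 1, and let γ : [0, L₁] → ℝⁿ and η : [0, L₂] → ℝⁿ (L₁, L₂ > 0) be unit-speed C² curves with γ(0) = η(0) and γ'(0) = η'(0), satisfying: (Assumption 2) for all s, s' ∈ [0, L₁] and t, t' ∈ [0, L₂], if s + t ≤ s' + t' then ‖γ'(s) − η'(t)‖ ≤ ‖γ'(s') − η'(t')‖; and (Assumption 3) there exist ε₀ > 0 and a ∈ (0, 2) such that for all s ∈ (0, min(ε₀, L₁)], ‖γ'(s) − γ'(0)‖ ≥ s^a, and for all t ∈ (0, min(ε₀, L₂)], ‖η'(t) − η'(0)‖ ≥ t^a. Then for all k₁, k₂ > 0 and all ε > 0 there exists δ > 0 such that for all σ_x ∈ (0, δ) and all σ_t ∈ [k₁σ_x, k₂σ_x], ⟨μ_γ, μ_η⟩ ≤ ε · (‖μ_γ‖² + ‖μ_η‖²). -/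
open Set MeasureTheory

/-- The Gaussian oriented-varifold inner product of two curves `γ : [0, L₁] → ℝⁿ` and
`η : [0, L₂] → ℝⁿ`, given together with their (unit) tangent fields `tγ`, `tη` and
kernel widths `σx`, `σt`. -/
noncomputable def vfInner {n : ℕ} (σx σt L₁ L₂ : ℝ)
    (γ tγ η tη : ℝ → EuclideanSpace ℝ (Fin n)) : ℝ :=
  ∫ s in (0:ℝ)..L₁, ∫ t in (0:ℝ)..L₂,
    Real.exp (-‖γ s - η t‖ ^ 2 / σx ^ 2) * Real.exp (-‖tγ s - tη t‖ ^ 2 / σt ^ 2)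

/-!
By Assumption 3 the tangent `γ'` leaves `γ'(0) = η'(0)` at rate at least `s ^ a`, and
Assumption 2 propagates this to every pair with `s + t ≥ r`: there `‖γ'(s) - η'(t)‖ ≥ r ^ a`.
With `r = σx ^ p`, `1/2 < p < 1/a`, the cross integrand is at most `exp (-(r ^ a / σt) ^ 2)`,
super-polynomially small in `σx` because `σt ≤ k₂ σx`, outside the corner `[0, r]²` of area
`r ^ 2 = o(σx)`. On the other hand `‖μ_γ‖²` is of order at least `σx`: on the band
`|s - t| ≤ σx` both Gaussian factors stay bounded below, since `γ` is 1-Lipschitz, `γ'` is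
Lipschitz (`γ` is C²) and `σt ≥ k₁ σx`.
-/

open Filter Topology Real Function

noncomputable def gaussWeight (σ d : ℝ) : ℝ := exp (-d ^ 2 / σ ^ 2)

section gaussWeight

variable {σ σ' d d' ρ : ℝ}

theorem gaussWeight_pos : 0 < gaussWeight σ d := exp_pos _

theorem gaussWeight_le_one : gaussWeight σ d ≤ 1 :=
  exp_le_one_iff.2 (div_nonpos_of_nonpos_of_nonneg (neg_nonpos.2 (sq_nonneg d)) (sq_nonneg σ))

theorem gaussWeight_le_of_le (hd : 0 ≤ d) (hdd' : d ≤ d') :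
    gaussWeight σ d' ≤ gaussWeight σ d := by
  unfold gaussWeight
  gcongr

theorem gaussWeight_le_of_width_le (hσ : 0 < σ) (hσσ' : σ ≤ σ') :
    gaussWeight σ d ≤ gaussWeight σ' d := by
  refine exp_le_exp.2 ?_
  rw [neg_div, neg_div, neg_le_neg_iff]
  exact div_le_div_of_nonneg_left (sq_nonneg d) (by positivity) (by gcongr)

theorem exp_neg_sq_le_gaussWeight (hσ : 0 < σ) (hd : 0 ≤ d) (hdρ : d ≤ ρ * σ) :
    exp (-ρ ^ 2) ≤ gaussWeight σ d := by
  unfold gaussWeight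
  gcongr
  rw [neg_div, neg_le_neg_iff, div_le_iff₀ (by positivity), ← mul_pow]
  gcongr

end gaussWeight

-- `f` need not be integrable: then its integral is the junk value `0`.
theorem intervalIntegral_le_of_le_of_nonneg {f g : ℝ → ℝ} {a b : ℝ} (hab : a ≤ b)
    (hg : IntervalIntegrable g volume a b) (hg₀ : ∀ x ∈ Icc a b, 0 ≤ g x)
    (hfg : ∀ x ∈ Icc a b, f x ≤ g x) : ∫ x in a..b, f x ≤ ∫ x in a..b, g x := by
  by_cases hf : IntervalIntegrable f volume a b
  · exact intervalIntegral.integral_mono_on hab hf hg hfg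
  · rw [intervalIntegral.integral_undef hf]
    exact intervalIntegral.integral_nonneg hab hg₀

theorem integral_integral_le_of_le_add_mul {L₁ L₂ C : ℝ} (hL₁ : 0 ≤ L₁) (hL₂ : 0 ≤ L₂)
    (hC : 0 ≤ C) {f : ℝ → ℝ → ℝ} {φ ψ : ℝ → ℝ} (hφ : IntervalIntegrable φ volume 0 L₁)
    (hψ : IntervalIntegrable ψ volume 0 L₂) (hφ₀ : ∀ s ∈ Icc 0 L₁, 0 ≤ φ s)
    (hψ₀ : ∀ t ∈ Icc 0 L₂, 0 ≤ ψ t)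
    (hf : ∀ s ∈ Icc 0 L₁, ∀ t ∈ Icc 0 L₂, f s t ≤ C + φ s * ψ t) :
    ∫ s in 0..L₁, ∫ t in 0..L₂, f s t ≤
      L₁ * L₂ * C + (∫ s in 0..L₁, φ s) * ∫ t in 0..L₂, ψ t := by
  have hΨ₀ : 0 ≤ ∫ t in 0..L₂, ψ t := intervalIntegral.integral_nonneg hL₂ hψ₀
  have hinner : ∀ s ∈ Icc 0 L₁,
      ∫ t in 0..L₂, f s t ≤ L₂ * C + φ s * ∫ t in 0..L₂, ψ t := fun s hs ↦ by
    calc ∫ t in 0..L₂, f s t ≤ ∫ t in 0..L₂, (C + φ s * ψ t) :=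
          intervalIntegral_le_of_le_of_nonneg hL₂ (intervalIntegrable_const.add (hψ.const_mul _))
            (fun t ht ↦ add_nonneg hC (mul_nonneg (hφ₀ s hs) (hψ₀ t ht))) (hf s hs)
      _ = L₂ * C + φ s * ∫ t in 0..L₂, ψ t := by
          rw [intervalIntegral.integral_add intervalIntegrable_const (hψ.const_mul _),
            intervalIntegral.integral_const_mul, intervalIntegral.integral_const, smul_eq_mul,
            sub_zero]
  calc ∫ s in 0..L₁, ∫ t in 0..L₂, f s t
      ≤ ∫ s in 0..L₁, (L₂ * C + φ s * ∫ t in 0..L₂, ψ t) :=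
        intervalIntegral_le_of_le_of_nonneg hL₁ (intervalIntegrable_const.add (hφ.mul_const _))
          (fun s hs ↦ add_nonneg (mul_nonneg hL₂ hC) (mul_nonneg (hφ₀ s hs) hΨ₀)) hinner
    _ = L₁ * L₂ * C + (∫ s in 0..L₁, φ s) * ∫ t in 0..L₂, ψ t := by
        rw [intervalIntegral.integral_add intervalIntegrable_const (hφ.mul_const _),
          intervalIntegral.integral_const, intervalIntegral.integral_mul_const, smul_eq_mul,
          sub_zero, mul_assoc]

theorem intervalIntegral_indicator_Iic_one_le {r L : ℝ} (hr : 0 ≤ r) (hL : 0 ≤ L) :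
    ∫ x in 0..L, (Iic r).indicator 1 x ≤ r := by
  rw [intervalIntegral.integral_of_le hL, integral_indicator_one measurableSet_Iic,
    measureReal_restrict_apply measurableSet_Iic]
  calc volume.real (Iic r ∩ Ioc 0 L) ≤ volume.real (Ioc 0 r) :=
        measureReal_mono (fun x hx ↦ ⟨hx.2.1, hx.1⟩) measure_Ioc_lt_top.ne
    _ = r := by rw [Real.volume_real_Ioc_of_le hr, sub_zero]

theorem intervalIntegrable_integral_of_continuousOn {L₁ L₂ : ℝ} (hL₁ : 0 ≤ L₁) (hL₂ : 0 ≤ L₂)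
    {f : ℝ → ℝ → ℝ} (hf : ContinuousOn (uncurry f) (Icc 0 L₁ ×ˢ Icc 0 L₂)) :
    IntervalIntegrable (fun s ↦ ∫ t in 0..L₂, f s t) volume 0 L₁ := by
  obtain ⟨K, hK⟩ := (isCompact_Icc.prod isCompact_Icc).exists_bound_of_continuousOn hf
  have hmeas : AEStronglyMeasurable (uncurry f)
      ((volume.restrict (Ioc 0 L₁)).prod (volume.restrict (Ioc 0 L₂))) := by
    rw [Measure.prod_restrict, ← Measure.volume_eq_prod]
    exact (hf.mono (prod_mono Ioc_subset_Icc_self Ioc_subset_Icc_self)).aestronglyMeasurable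
      (measurableSet_Ioc.prod measurableSet_Ioc)
  rw [intervalIntegrable_iff_integrableOn_Ioc_of_le hL₁]
  simp_rw [intervalIntegral.integral_of_le hL₂]
  refine Integrable.of_bound hmeas.integral_prod_right' (K * L₂)
    (ae_restrict_of_forall_mem measurableSet_Ioc fun s hs ↦ ?_)
  calc ‖∫ t in Ioc 0 L₂, f s t‖ ≤ K * volume.real (Ioc 0 L₂) :=
        norm_setIntegral_le_of_norm_le_const measure_Ioc_lt_top fun t ht ↦
          hK (s, t) ⟨Ioc_subset_Icc_self hs, Ioc_subset_Icc_self ht⟩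
    _ = K * L₂ := by rw [Real.volume_real_Ioc_of_le hL₂, sub_zero]

theorem le_integral_integral_of_le_near_diagonal {L r c : ℝ} (hr : 0 ≤ r) (hrL : r ≤ L / 2)
    {f : ℝ → ℝ → ℝ} (hf : ContinuousOn (uncurry f) (Icc 0 L ×ˢ Icc 0 L))
    (hf₀ : ∀ s ∈ Icc 0 L, ∀ t ∈ Icc 0 L, 0 ≤ f s t)
    (hfc : ∀ s ∈ Icc 0 L, ∀ t ∈ Icc 0 L, |s - t| ≤ r → c ≤ f s t) :
    c * r * (L / 2) ≤ ∫ s in 0..L, ∫ t in 0..L, f s t := by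
  have hL : 0 ≤ L := by linarith
  have hfs : ∀ s ∈ Icc 0 L, IntervalIntegrable (f s) volume 0 L := fun s hs ↦
    ((hf.uncurry_left s hs).mono (uIcc_of_le hL).subset).intervalIntegrable
  have hband : ∀ s ∈ Icc 0 (L / 2), c * r ≤ ∫ t in 0..L, f s t := fun s hs ↦ by
    have hsL : s + r ≤ L := by linarith [hs.2]
    have hsub : Icc s (s + r) ⊆ Icc 0 L := Icc_subset_Icc hs.1 hsL
    have hs' : s ∈ Icc 0 L := hsub ⟨le_rfl, by linarith⟩
    calc c * r = ∫ _ in s..s + r, c := by simp [mul_comm]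
      _ ≤ ∫ t in s..s + r, f s t :=
          intervalIntegral.integral_mono_on (by linarith) intervalIntegrable_const
            ((hfs s hs').mono_set (by rw [uIcc_of_le (by linarith), uIcc_of_le hL]; exact hsub))
            fun t ht ↦ hfc s hs' t (hsub ht)
              (by rw [abs_sub_comm, abs_of_nonneg (by linarith [ht.1])]; linarith [ht.2])
      _ ≤ ∫ t in 0..L, f s t :=
          intervalIntegral.integral_mono_interval hs.1 (by linarith) hsL
            (ae_restrict_of_forall_mem measurableSet_Ioc fun t ht ↦
              hf₀ s hs' t (Ioc_subset_Icc_self ht))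
            (hfs s hs')
  have hF := intervalIntegrable_integral_of_continuousOn hL hL hf
  calc c * r * (L / 2) = ∫ _ in 0..L / 2, c * r := by simp; ring
    _ ≤ ∫ s in 0..L / 2, ∫ t in 0..L, f s t :=
        intervalIntegral.integral_mono_on (by linarith) intervalIntegrable_const
          (hF.mono_set (by rw [uIcc_of_le (by linarith), uIcc_of_le hL]; exact
            Icc_subset_Icc_right (by linarith))) hband
    _ ≤ ∫ s in 0..L, ∫ t in 0..L, f s t :=
        intervalIntegral.integral_mono_interval le_rfl (by linarith) (by linarith)
          (ae_restrict_of_forall_mem measurableSet_Ioc fun s hs ↦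
            intervalIntegral.integral_nonneg hL fun t ht ↦ hf₀ s (Ioc_subset_Icc_self hs) t ht)
          hF

theorem exists_lipschitzOnWith_deriv_of_contDiffOn_two {E : Type*}
    [NormedAddCommGroup E] [NormedSpace ℝ E] {a b : ℝ} (hab : a < b) {γ γ' : ℝ → E}
    (hγ : ∀ s ∈ Icc a b, HasDerivWithinAt γ (γ' s) (Icc a b) s)
    (hγ₂ : ContDiffOn ℝ 2 γ (Icc a b)) : ∃ M, LipschitzOnWith M γ' (Icc a b) := by
  have hu : UniqueDiffOn ℝ (Icc a b) := uniqueDiffOn_Icc hab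
  obtain ⟨M, hM⟩ := (hγ₂.derivWithin hu (by norm_num : (1 : WithTop ℕ∞) + 1 ≤ 2)
    ).exists_lipschitzOnWith one_ne_zero (convex_Icc a b) isCompact_Icc
  refine ⟨M, fun s hs t ht ↦ ?_⟩
  rw [← (hγ s hs).derivWithin (hu s hs), ← (hγ t ht).derivWithin (hu t ht)]
  exact hM hs ht

theorem lipschitzOnWith_one_of_norm_deriv_le_one {E : Type*}
    [NormedAddCommGroup E] [NormedSpace ℝ E] {a b : ℝ} {γ γ' : ℝ → E}
    (hγ : ∀ s ∈ Icc a b, HasDerivWithinAt γ (γ' s) (Icc a b) s)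
    (hγ' : ∀ s ∈ Icc a b, ‖γ' s‖ ≤ 1) : LipschitzOnWith 1 γ (Icc a b) :=
  (convex_Icc a b).lipschitzOnWith_of_nnnorm_hasDerivWithin_le hγ fun s hs ↦ by
    simpa [← NNReal.coe_le_coe] using hγ' s hs

theorem rpow_le_norm_sub_of_le_add {E : Type*} [SeminormedAddCommGroup E] {L₁ L₂ ℓ a r s t : ℝ}
    {u v : ℝ → E}
    (hmono : ∀ s ∈ Icc (0:ℝ) L₁, ∀ s' ∈ Icc (0:ℝ) L₁, ∀ t ∈ Icc (0:ℝ) L₂, ∀ t' ∈ Icc (0:ℝ) L₂,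
      s + t ≤ s' + t' → ‖u s - v t‖ ≤ ‖u s' - v t'‖)
    (h₀ : u 0 = v 0) (hdev : ∀ s ∈ Ioc 0 ℓ, s ^ a ≤ ‖u s - u 0‖) (hℓ : ℓ ≤ L₁) (hL₂ : 0 ≤ L₂)
    (ha : 0 ≤ a) (hr : 0 < r) (hrℓ : r ≤ ℓ) (hs : s ∈ Icc 0 L₁) (ht : t ∈ Icc 0 L₂)
    (hrst : r ≤ s + t) : r ^ a ≤ ‖u s - v t‖ := by
  set w := min (s + t) ℓ
  have hrw : r ≤ w := le_min hrst hrℓ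
  have hw : w ∈ Ioc 0 ℓ := ⟨hr.trans_le hrw, min_le_right _ _⟩
  calc r ^ a ≤ w ^ a := rpow_le_rpow hr.le hrw ha
    _ ≤ ‖u w - v 0‖ := h₀ ▸ hdev w hw
    _ ≤ ‖u s - v t‖ :=
        hmono w ⟨hw.1.le, hw.2.trans hℓ⟩ s hs 0 ⟨le_rfl, hL₂⟩ t ht (by simp [w])

theorem vfInner_eq_integral_gaussWeight {n : ℕ} (σx σt L₁ L₂ : ℝ)
    (γ tγ η tη : ℝ → EuclideanSpace ℝ (Fin n)) :
    vfInner σx σt L₁ L₂ γ tγ η tη = ∫ s in (0:ℝ)..L₁, ∫ t in (0:ℝ)..L₂,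
      gaussWeight σx ‖γ s - η t‖ * gaussWeight σt ‖tγ s - tη t‖ := rfl

theorem vfInner_nonneg {n : ℕ} {σx σt L₁ L₂ : ℝ} (hL₁ : 0 ≤ L₁) (hL₂ : 0 ≤ L₂)
    (γ tγ η tη : ℝ → EuclideanSpace ℝ (Fin n)) : 0 ≤ vfInner σx σt L₁ L₂ γ tγ η tη :=
  intervalIntegral.integral_nonneg hL₁ fun _ _ ↦ intervalIntegral.integral_nonneg hL₂ fun _ _ ↦
    (mul_pos gaussWeight_pos gaussWeight_pos).le

theorem vfInner_le_of_le_norm_tangent_sub {n : ℕ} {σx σt L₁ L₂ r g : ℝ} (hL₁ : 0 ≤ L₁)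
    (hL₂ : 0 ≤ L₂) (hr : 0 ≤ r) (hg : 0 ≤ g) {γ tγ η tη : ℝ → EuclideanSpace ℝ (Fin n)}
    (hgap : ∀ s ∈ Icc 0 L₁, ∀ t ∈ Icc 0 L₂, r ≤ s + t → g ≤ ‖tγ s - tη t‖) :
    vfInner σx σt L₁ L₂ γ tγ η tη ≤ L₁ * L₂ * gaussWeight σt g + r * r := by
  set φ : ℝ → ℝ := (Iic r).indicator 1
  have hφ : ∀ L, IntervalIntegrable φ volume 0 L := fun L ↦ intervalIntegrable_iff.2
    ((intervalIntegrable_iff.1 (intervalIntegrable_const (c := (1 : ℝ)))).indicator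
      measurableSet_Iic)
  have hφ₀ : ∀ x, 0 ≤ φ x := fun x ↦ indicator_nonneg (fun _ _ ↦ zero_le_one) x
  calc vfInner σx σt L₁ L₂ γ tγ η tη
      ≤ L₁ * L₂ * gaussWeight σt g + (∫ s in 0..L₁, φ s) * ∫ t in 0..L₂, φ t := by
        refine integral_integral_le_of_le_add_mul hL₁ hL₂ gaussWeight_pos.le (hφ L₁) (hφ L₂)
          (fun s _ ↦ hφ₀ s) (fun t _ ↦ hφ₀ t) fun s hs t ht ↦ ?_
        by_cases hrst : r ≤ s + t
        · calc gaussWeight σx ‖γ s - η t‖ * gaussWeight σt ‖tγ s - tη t‖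
              ≤ 1 * gaussWeight σt g :=
                mul_le_mul gaussWeight_le_one (gaussWeight_le_of_le hg (hgap s hs t ht hrst))
                  gaussWeight_pos.le zero_le_one
            _ ≤ gaussWeight σt g + φ s * φ t := by
                linarith [mul_nonneg (hφ₀ s) (hφ₀ t)]
        · have hφs : φ s = 1 := indicator_of_mem (mem_Iic.2 (by linarith [ht.1])) 1
          have hφt : φ t = 1 := indicator_of_mem (mem_Iic.2 (by linarith [hs.1])) 1
          calc gaussWeight σx ‖γ s - η t‖ * gaussWeight σt ‖tγ s - tη t‖ ≤ 1 * 1 :=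
                mul_le_mul gaussWeight_le_one gaussWeight_le_one gaussWeight_pos.le zero_le_one
            _ ≤ gaussWeight σt g + φ s * φ t := by
                rw [hφs, hφt]; linarith [gaussWeight_pos (σ := σt) (d := g)]
    _ ≤ L₁ * L₂ * gaussWeight σt g + r * r := by
        gcongr
        · exact intervalIntegral.integral_nonneg hL₂ fun t _ ↦ hφ₀ t
        · exact intervalIntegral_indicator_Iic_one_le hr hL₁
        · exact intervalIntegral_indicator_Iic_one_le hr hL₂

theorem le_vfInner_self {n : ℕ} {σx σt L k : ℝ} {M : NNReal} (hσx : 0 < σx) (hσxL : σx ≤ L / 2)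
    (hk : 0 < k) (hσt : k * σx ≤ σt) {γ tγ : ℝ → EuclideanSpace ℝ (Fin n)}
    (hγ : LipschitzOnWith 1 γ (Icc 0 L)) (htγ : LipschitzOnWith M tγ (Icc 0 L)) :
    exp (-1) * exp (-(M / k) ^ 2) * σx * (L / 2) ≤ vfInner σx σt L L γ tγ γ tγ := by
  have hσt₀ : 0 < σt := (mul_pos hk hσx).trans_le hσt
  have hcont : ∀ {v : ℝ → EuclideanSpace ℝ (Fin n)} {σ : ℝ}, ContinuousOn v (Icc 0 L) →
      ContinuousOn (fun p : ℝ × ℝ ↦ gaussWeight σ ‖v p.1 - v p.2‖) (Icc 0 L ×ˢ Icc 0 L) :=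
    fun hv ↦ continuous_exp.comp_continuousOn
      ((((hv.comp continuousOn_fst fun _ hp ↦ hp.1).sub
        (hv.comp continuousOn_snd fun _ hp ↦ hp.2)).norm.pow 2).neg.div_const _)
  rw [vfInner_eq_integral_gaussWeight]
  refine le_integral_integral_of_le_near_diagonal hσx.le hσxL
    ((hcont hγ.continuousOn).mul (hcont htγ.continuousOn))
    (fun _ _ _ _ ↦ (mul_pos gaussWeight_pos gaussWeight_pos).le) fun s hs t ht hst ↦ ?_
  have hd₁ : ‖γ s - γ t‖ ≤ 1 * σx :=
    calc ‖γ s - γ t‖ ≤ 1 * |s - t| := by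
          simpa [← dist_eq_norm, ← Real.dist_eq] using hγ.dist_le_mul s hs t ht
      _ ≤ 1 * σx := by gcongr
  have hd₂ : ‖tγ s - tγ t‖ ≤ M / k * σt :=
    calc ‖tγ s - tγ t‖ ≤ M * |s - t| := by
          simpa [← dist_eq_norm, ← Real.dist_eq] using htγ.dist_le_mul s hs t ht
      _ ≤ M / k * (k * σx) := by
          rw [← mul_assoc, div_mul_cancel₀ _ hk.ne']; gcongr
      _ ≤ M / k * σt := by gcongr
  exact mul_le_mul
    (by simpa only [one_pow] using exp_neg_sq_le_gaussWeight hσx (norm_nonneg _) hd₁)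
    (exp_neg_sq_le_gaussWeight hσt₀ (norm_nonneg _) hd₂) (exp_pos _).le gaussWeight_pos.le

theorem tendsto_rpow_nhdsGT_zero {s : ℝ} (hs : 0 < s) :
    Tendsto (fun x : ℝ ↦ x ^ s) (𝓝[>] 0) (𝓝 0) := by
  simpa [zero_rpow hs.ne'] using
    ((continuousAt_rpow_const 0 s (Or.inr hs.le)).tendsto).mono_left nhdsWithin_le_nhds

theorem tendsto_gaussWeight_rpow_div_nhdsGT_zero {k θ : ℝ} (hk : k ≠ 0) (hθ : θ < 1) :
    Tendsto (fun x ↦ gaussWeight (k * x) (x ^ θ) / x) (𝓝[>] 0) (𝓝 0) := by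
  set q := 2 - 2 * θ
  have hq : 0 < q := by linarith
  refine ((tendsto_rpow_mul_exp_neg_mul_atTop_nhds_zero (1 / q) (k ^ 2)⁻¹ (by positivity)).comp
    (tendsto_rpow_neg_nhdsGT_zero (neg_lt_zero.2 hq))).congr'
    (eventually_mem_nhdsWithin.mono fun x (hx : 0 < x) ↦ ?_)
  have hpow : x ^ (-q) = (x ^ θ) ^ 2 / x ^ 2 := by
    rw [← rpow_natCast, ← rpow_mul hx.le, ← rpow_natCast x 2, ← rpow_sub hx]
    congr 1; push_cast; ring
  have hinv : (x ^ (-q)) ^ (1 / q) = x⁻¹ := by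
    rw [← rpow_mul hx.le, neg_mul, mul_one_div_cancel hq.ne', rpow_neg_one]
  rw [comp_apply, hinv, hpow]
  unfold gaussWeight
  field_simp

theorem eventually_mul_gaussWeight_rpow_add_le {k θ p c : ℝ} (hk : k ≠ 0) (hθ : θ < 1)
    (hp : 1 / 2 < p) (hc : 0 < c) (C : ℝ) :
    ∀ᶠ x in 𝓝[>] 0, C * gaussWeight (k * x) (x ^ θ) + x ^ p * x ^ p ≤ c * x := by
  have h : Tendsto (fun x ↦ C * (gaussWeight (k * x) (x ^ θ) / x) + x ^ (2 * p - 1))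
      (𝓝[>] 0) (𝓝 0) := by
    simpa using ((tendsto_gaussWeight_rpow_div_nhdsGT_zero hk hθ).const_mul C).add
      (tendsto_rpow_nhdsGT_zero (by linarith : 0 < 2 * p - 1))
  filter_upwards [h.eventually_lt_const hc, self_mem_nhdsWithin] with x hlt (hx : 0 < x)
  calc C * gaussWeight (k * x) (x ^ θ) + x ^ p * x ^ p
      = (C * (gaussWeight (k * x) (x ^ θ) / x) + x ^ (2 * p - 1)) * x := by
        rw [← rpow_add hx, add_mul, mul_assoc, div_mul_cancel₀ _ hx.ne', ← rpow_add_one hx.ne']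
        ring_nf
    _ ≤ c * x := by gcongr

theorem cross_term_negligible_branching_edges_general
    {n : ℕ} (L₁ L₂ : ℝ) (hL₁ : 0 < L₁) (hL₂ : 0 < L₂)
    (γ tγ η tη : ℝ → EuclideanSpace ℝ (Fin n))
    -- unit-speed C¹ structure
    (hγderiv : ∀ s ∈ Icc (0:ℝ) L₁, HasDerivWithinAt γ (tγ s) (Icc 0 L₁) s)
    (hγunit : ∀ s ∈ Icc (0:ℝ) L₁, ‖tγ s‖ = 1)
    -- C² regularity
    (hγC2 : ContDiffOn ℝ 2 γ (Icc 0 L₁))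
    -- common branching point and common initial tangent
    (htangent : tγ 0 = tη 0)
    -- Assumption 2: tangent distance monotone in total arc length from the branching point
    (hA2 : ∀ s ∈ Icc (0:ℝ) L₁, ∀ s' ∈ Icc (0:ℝ) L₁, ∀ t ∈ Icc (0:ℝ) L₂, ∀ t' ∈ Icc (0:ℝ) L₂,
      s + t ≤ s' + t' → ‖tγ s - tη t‖ ≤ ‖tγ s' - tη t'‖)
    -- Assumption 3: the branches deviate from the initial direction at rate at least `s ^ a`
    (hA3 : ∃ ε₀ : ℝ, 0 < ε₀ ∧ ∃ a : ℝ, a ∈ Ioo (0:ℝ) 2 ∧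
      (∀ s ∈ Ioc (0:ℝ) (min ε₀ L₁), s ^ a ≤ ‖tγ s - tγ 0‖) ∧
      (∀ t ∈ Ioc (0:ℝ) (min ε₀ L₂), t ^ a ≤ ‖tη t - tη 0‖)) :
    ∀ k₁ k₂ : ℝ, 0 < k₁ → 0 < k₂ → ∀ ε : ℝ, 0 < ε →
      ∃ δ > 0, ∀ σx : ℝ, 0 < σx → σx < δ → ∀ σt : ℝ, k₁ * σx ≤ σt → σt ≤ k₂ * σx →
        vfInner σx σt L₁ L₂ γ tγ η tη ≤
          ε * (vfInner σx σt L₁ L₁ γ tγ γ tγ + vfInner σx σt L₂ L₂ η tη η tη) := by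
  intro k₁ k₂ hk₁ hk₂ ε hε
  obtain ⟨ε₀, hε₀, a, ⟨ha₀, ha₂⟩, hdev, -⟩ := hA3
  obtain ⟨p, hp, hpa⟩ : ∃ p, 1 / 2 < p ∧ p < 1 / a :=
    exists_between (one_div_lt_one_div_of_lt ha₀ ha₂)
  obtain ⟨M, hM⟩ := exists_lipschitzOnWith_deriv_of_contDiffOn_two hL₁ hγderiv hγC2
  have hγ := lipschitzOnWith_one_of_norm_deriv_le_one hγderiv fun s hs ↦ (hγunit s hs).le
  set c := exp (-1) * exp (-(M / k₁) ^ 2) * (L₁ / 2)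
  have hsmall : ∀ᶠ x in 𝓝[>] 0, x ≤ L₁ / 2 ∧ x ^ p ≤ min ε₀ L₁ ∧
      L₁ * L₂ * gaussWeight (k₂ * x) (x ^ (p * a)) + x ^ p * x ^ p ≤ ε * c * x :=
    (eventually_nhdsWithin_of_eventually_nhds (eventually_le_nhds (half_pos hL₁))).and
      (((tendsto_rpow_nhdsGT_zero (by linarith)).eventually_le_const (lt_min hε₀ hL₁)).and
        (eventually_mul_gaussWeight_rpow_add_le hk₂.ne' (by rwa [lt_div_iff₀ ha₀] at hpa) hp
          (by positivity) _))
  obtain ⟨δ, hδ, hδsmall⟩ := mem_nhdsGT_iff_exists_Ioo_subset.1 hsmall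
  refine ⟨δ, hδ, fun x hx hxδ σt hσt₁ hσt₂ ↦ ?_⟩
  obtain ⟨hxL, hrℓ, hcross⟩ := hδsmall ⟨hx, hxδ⟩
  have hr : 0 < x ^ p := rpow_pos_of_pos hx p
  calc vfInner x σt L₁ L₂ γ tγ η tη ≤ L₁ * L₂ * gaussWeight σt ((x ^ p) ^ a) + x ^ p * x ^ p :=
        vfInner_le_of_le_norm_tangent_sub hL₁.le hL₂.le hr.le (by positivity)
          fun s hs t ht hst ↦ rpow_le_norm_sub_of_le_add hA2 htangent hdev (min_le_right _ _)
            hL₂.le ha₀.le hr hrℓ hs ht hst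
    _ ≤ L₁ * L₂ * gaussWeight (k₂ * x) (x ^ (p * a)) + x ^ p * x ^ p := by
        rw [rpow_mul hx.le]
        gcongr
        exact gaussWeight_le_of_width_le ((mul_pos hk₁ hx).trans_le hσt₁) hσt₂
    _ ≤ ε * (exp (-1) * exp (-(M / k₁) ^ 2) * x * (L₁ / 2)) := hcross.trans_eq (by ring)
    _ ≤ ε * (vfInner x σt L₁ L₁ γ tγ γ tγ + vfInner x σt L₂ L₂ η tη η tη) := by
        gcongr
        exact (le_vfInner_self hx hxL hk₁ hσt₁ hγ hM).trans
          (le_add_of_nonneg_right (vfInner_nonneg hL₂.le hL₂.le _ _ _ _))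

/-- Lemma 2 of the paper: for two edges `γ`, `η` (unit-speed C² curves) branching from a common
point `γ 0 = η 0` with common initial tangent `tγ 0 = tη 0`, satisfying the tangent-distance
monotonicity Assumption 2 and the deviation-rate Assumption 3, the cross term `⟨μ_γ, μ_η⟩` is
`o(‖μ_γ‖² + ‖μ_η‖²)` as `σx, σt → 0` with `σx ≍ σt`. -/
theorem cross_term_negligible_branching_edges
    {n : ℕ} (hn : 1 ≤ n) (L₁ L₂ : ℝ) (hL₁ : 0 < L₁) (hL₂ : 0 < L₂)
    (γ tγ η tη : ℝ → EuclideanSpace ℝ (Fin n))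
    -- unit-speed C¹ structure
    (hγderiv : ∀ s ∈ Icc (0:ℝ) L₁, HasDerivWithinAt γ (tγ s) (Icc 0 L₁) s)
    (hηderiv : ∀ t ∈ Icc (0:ℝ) L₂, HasDerivWithinAt η (tη t) (Icc 0 L₂) t)
    (hγunit : ∀ s ∈ Icc (0:ℝ) L₁, ‖tγ s‖ = 1)
    (hηunit : ∀ t ∈ Icc (0:ℝ) L₂, ‖tη t‖ = 1)
    -- C² regularity
    (hγC2 : ContDiffOn ℝ 2 γ (Icc 0 L₁))
    (hηC2 : ContDiffOn ℝ 2 η (Icc 0 L₂))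
    -- common branching point and common initial tangent
    (hjoin : γ 0 = η 0)
    (htangent : tγ 0 = tη 0)
    -- Assumption 2: tangent distance monotone in total arc length from the branching point
    (hA2 : ∀ s ∈ Icc (0:ℝ) L₁, ∀ s' ∈ Icc (0:ℝ) L₁, ∀ t ∈ Icc (0:ℝ) L₂, ∀ t' ∈ Icc (0:ℝ) L₂,
      s + t ≤ s' + t' → ‖tγ s - tη t‖ ≤ ‖tγ s' - tη t'‖)
    -- Assumption 3: the branches deviate from the initial direction at rate at least `s ^ a`
    (hA3 : ∃ ε₀ : ℝ, 0 < ε₀ ∧ ∃ a : ℝ, a ∈ Ioo (0:ℝ) 2 ∧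
      (∀ s ∈ Ioc (0:ℝ) (min ε₀ L₁), s ^ a ≤ ‖tγ s - tγ 0‖) ∧
      (∀ t ∈ Ioc (0:ℝ) (min ε₀ L₂), t ^ a ≤ ‖tη t - tη 0‖)) :
    ∀ k₁ k₂ : ℝ, 0 < k₁ → 0 < k₂ → ∀ ε : ℝ, 0 < ε →
      ∃ δ > 0, ∀ σx : ℝ, 0 < σx → σx < δ → ∀ σt : ℝ, k₁ * σx ≤ σt → σt ≤ k₂ * σx →
        vfInner σx σt L₁ L₂ γ tγ η tη ≤
          ε * (vfInner σx σt L₁ L₁ γ tγ γ tγ + vfInner σx σt L₂ L₂ η tη η tη) :=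
  cross_term_negligible_branching_edges_general L₁ L₂ hL₁ hL₂ γ tγ η tη hγderiv hγunit hγC2 htangent
    hA2 hA3
end

section
/- Let n ≥ 1 and let γ : [0, L] → ℝⁿ (L > 0) be a unit-speed C¹ curve whose derivative γ' is K-Lipschitz on [0, L] for some K > 0. Then for every ρ with 0 < ρ ≤ L and all σ_x, σ_t > 0, the squared varifold norm satisfies the lower bound ‖μ_γ‖² ≥ L·ρ · exp(−ρ²/σ_x²) · exp(−K²ρ²/σ_t²). -/
open Set MeasureTheory

/-- Lower bound on the squared varifold norm of a unit-speed C¹ curve with `K`-Lipschitz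
tangent field: `‖μ_γ‖² ≥ L·ρ·exp(−ρ²/σx²)·exp(−K²ρ²/σt²)` for every `0 < ρ ≤ L`. -/
theorem vfNorm_sq_lower_bound
    {n : ℕ} (hn : 1 ≤ n) (L : ℝ) (hL : 0 < L)
    (γ tγ : ℝ → EuclideanSpace ℝ (Fin n))
    (hderiv : ∀ s ∈ Icc (0:ℝ) L, HasDerivWithinAt γ (tγ s) (Icc 0 L) s)
    (hunit : ∀ s ∈ Icc (0:ℝ) L, ‖tγ s‖ = 1)
    (K : ℝ) (hK : 0 < K)
    (hlip : LipschitzOnWith (Real.toNNReal K) tγ (Icc 0 L))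
    (ρ : ℝ) (hρ0 : 0 < ρ) (hρL : ρ ≤ L) (σx σt : ℝ) (hσx : 0 < σx) (hσt : 0 < σt) :
    L * ρ * Real.exp (-ρ ^ 2 / σx ^ 2) * Real.exp (-K ^ 2 * ρ ^ 2 / σt ^ 2) ≤
      vfInner σx σt L L γ tγ γ tγ := by
  -- clamp to [0, L]
  set π : ℝ → ℝ := fun x => max 0 (min L x) with hπ
  have hπ_cont : Continuous π := continuous_const.max (continuous_const.min continuous_id)
  have hπ_mem : ∀ x, π x ∈ Icc (0:ℝ) L := fun x =>
    ⟨le_max_left _ _, max_le hL.le (min_le_left _ _)⟩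
  have hπ_eq : ∀ x ∈ Icc (0:ℝ) L, π x = x := by
    intro x hx
    simp only [hπ, min_eq_right hx.2, max_eq_right hx.1]
  have hγcont : ContinuousOn γ (Icc 0 L) := fun s hs => (hderiv s hs).continuousWithinAt
  have htcont : ContinuousOn tγ (Icc 0 L) := hlip.continuousOn
  set Γ : ℝ → EuclideanSpace ℝ (Fin n) := γ ∘ π with hΓ
  set T : ℝ → EuclideanSpace ℝ (Fin n) := tγ ∘ π with hT
  have hΓc : Continuous Γ := hγcont.comp_continuous hπ_cont hπ_mem
  have hTc : Continuous T := htcont.comp_continuous hπ_cont hπ_mem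
  set f : ℝ → ℝ → ℝ := fun s t =>
    Real.exp (-‖Γ s - Γ t‖ ^ 2 / σx ^ 2) * Real.exp (-‖T s - T t‖ ^ 2 / σt ^ 2) with hf
  have hfc : Continuous (Function.uncurry f) := by
    apply Continuous.mul <;> apply Real.continuous_exp.comp <;> fun_prop
  have hfpos : ∀ s t, 0 < f s t := fun s t => mul_pos (Real.exp_pos _) (Real.exp_pos _)
  -- the curve is 1-Lipschitz on [0,L]
  have hcurve : ∀ s ∈ Icc (0:ℝ) L, ∀ t ∈ Icc (0:ℝ) L, ‖γ s - γ t‖ ≤ |s - t| := by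
    intro s hs t ht
    have := (convex_Icc (0:ℝ) L).norm_image_sub_le_of_norm_hasDerivWithin_le
      hderiv (fun x hx => (hunit x hx).le) ht hs
    simpa [Real.norm_eq_abs] using this
  -- the inner integral as a continuous function of s
  set I : ℝ → ℝ := fun s => ∫ t in (0:ℝ)..L, f s t with hI
  have hIc : Continuous I :=
    intervalIntegral.continuous_parametric_intervalIntegral_of_continuous' hfc 0 L
  -- rewrite vfInner using Γ, T
  have hrw : vfInner σx σt L L γ tγ γ tγ = ∫ s in (0:ℝ)..L, I s := by
    unfold vfInner
    apply intervalIntegral.integral_congr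
    intro s hs
    rw [uIcc_of_le hL.le] at hs
    apply intervalIntegral.integral_congr
    intro t ht
    rw [uIcc_of_le hL.le] at ht
    simp only [hf, hΓ, hT, Function.comp_apply, hπ_eq s hs, hπ_eq t ht]
  rw [hrw]
  set c : ℝ := Real.exp (-ρ ^ 2 / σx ^ 2) * Real.exp (-K ^ 2 * ρ ^ 2 / σt ^ 2) with hc
  -- pointwise bound on the inner integral
  have hinner : ∀ s ∈ Icc (0:ℝ) L, ρ * c ≤ I s := by
    intro s hs
    set a : ℝ := max 0 (s - ρ) with ha
    set b : ℝ := min (s + ρ) L with hb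
    have hab : a + ρ ≤ b := by
      have h1 : a ≤ s := max_le hs.1 (by linarith)
      have h2 : a ≤ L - ρ := max_le (by linarith) (by linarith [hs.2])
      exact le_min (by linarith) (by linarith)
    have ha0 : (0:ℝ) ≤ a := le_max_left _ _
    have hbL : b ≤ L := min_le_right _ _
    have hab' : a ≤ b := by linarith
    -- on [a,b] the integrand is at least c
    have hbound : ∀ t ∈ Icc a b, c ≤ f s t := by
      intro t ht
      have ht' : t ∈ Icc (0:ℝ) L := ⟨ha0.trans ht.1, ht.2.trans hbL⟩
      have hst : |s - t| ≤ ρ := by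
        have hta : s - ρ ≤ t := le_trans (le_max_right 0 (s - ρ)) ht.1
        have htb : t ≤ s + ρ := ht.2.trans (min_le_left _ _)
        rw [abs_le]; constructor <;> linarith
      have h1 : ‖γ s - γ t‖ ^ 2 ≤ ρ ^ 2 := by
        have := hcurve s hs t ht'
        have h0 : ‖γ s - γ t‖ ≤ ρ := this.trans hst
        exact pow_le_pow_left₀ (norm_nonneg _) h0 2
      have h2 : ‖tγ s - tγ t‖ ^ 2 ≤ K ^ 2 * ρ ^ 2 := by
        have := hlip.norm_sub_le hs ht'
        rw [Real.coe_toNNReal _ hK.le, Real.norm_eq_abs] at this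
        have h0 : ‖tγ s - tγ t‖ ≤ K * ρ := this.trans (by nlinarith [abs_nonneg (s - t)])
        calc ‖tγ s - tγ t‖ ^ 2 ≤ (K * ρ) ^ 2 := pow_le_pow_left₀ (norm_nonneg _) h0 2
          _ = K ^ 2 * ρ ^ 2 := by ring
      have hfs : f s t = Real.exp (-‖γ s - γ t‖ ^ 2 / σx ^ 2) *
          Real.exp (-‖tγ s - tγ t‖ ^ 2 / σt ^ 2) := by
        simp only [hf, hΓ, hT, Function.comp_apply, hπ_eq s hs, hπ_eq t ht']
      rw [hfs, hc]
      have e1 : Real.exp (-ρ ^ 2 / σx ^ 2) ≤ Real.exp (-‖γ s - γ t‖ ^ 2 / σx ^ 2) := by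
        apply Real.exp_le_exp.mpr
        rw [neg_div, neg_div, neg_le_neg_iff]
        exact (div_le_div_iff_of_pos_right (by positivity)).mpr h1
      have e2 : Real.exp (-K ^ 2 * ρ ^ 2 / σt ^ 2) ≤
          Real.exp (-‖tγ s - tγ t‖ ^ 2 / σt ^ 2) := by
        apply Real.exp_le_exp.mpr
        rw [neg_mul, neg_div, neg_div, neg_le_neg_iff]
        exact (div_le_div_iff_of_pos_right (by positivity)).mpr h2
      exact mul_le_mul e1 e2 (Real.exp_pos _).le (Real.exp_pos _).le
    have hint : IntervalIntegrable (f s) volume 0 L :=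
      (hfc.comp (Continuous.prodMk_right s)).intervalIntegrable 0 L
    have step1 : ρ * c ≤ ∫ t in a..b, f s t := by
      calc ρ * c ≤ (b - a) * c := by
            have hcpos : 0 < c := mul_pos (Real.exp_pos _) (Real.exp_pos _)
            nlinarith
        _ = ∫ t in a..b, c := by rw [intervalIntegral.integral_const, smul_eq_mul]
        _ ≤ ∫ t in a..b, f s t := by
            apply intervalIntegral.integral_mono_on hab' intervalIntegrable_const
              (hint.mono_set (by rw [uIcc_of_le hab', uIcc_of_le hL.le]; exact Icc_subset_Icc ha0 hbL))
            exact hbound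
    have step2 : (∫ t in a..b, f s t) ≤ I s := by
      apply intervalIntegral.integral_mono_interval ha0 hab' hbL
      · filter_upwards with t using (hfpos s t).le
      · exact hint
    linarith
  -- conclude
  calc L * ρ * Real.exp (-ρ ^ 2 / σx ^ 2) * Real.exp (-K ^ 2 * ρ ^ 2 / σt ^ 2)
      = (L - 0) * (ρ * c) := by rw [hc]; ring
    _ = ∫ _ in (0:ℝ)..L, ρ * c := by rw [intervalIntegral.integral_const, smul_eq_mul, sub_zero]
    _ ≤ ∫ s in (0:ℝ)..L, I s := by
        apply intervalIntegral.integral_mono_on hL.le intervalIntegrable_const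
          (hIc.intervalIntegrable 0 L)
        exact hinner
end

section
/- Let n ≥ 1, and let γ : [0, L₁] → ℝⁿ and η : [0, L₂] → ℝⁿ (L₁, L₂ > 0) be unit-speed C¹ curves with γ(L₁) = η(0), satisfying the monotonicity assumption: for all s, s' ∈ [0, L₁] and t, t' ∈ [0, L₂], if (L₁ − s) + t ≤ (L₁ − s') + t' then ‖γ(s) − η(t)‖ ≤ ‖γ(s') − η(t')‖. Then for every ε with 0 < ε ≤ min(L₁, L₂) and all σ_x, σ_t > 0, ⟨μ_γ, μ_η⟩ ≤ ε² + L₂·ε·exp(−‖γ(L₁) − η(ε)‖²/σ_x²) + L₁·ε·exp(−‖γ(L₁−ε) − γ(L₁)‖²/σ_x²) + L₁·L₂·exp(−‖γ(L₁−ε) − η(ε)‖²/σ_x²). -/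
open Set MeasureTheory

/-- Explicit upper bound on the cross inner product of two consecutive edges `γ`, `η`
(unit-speed C¹ curves joined at `γ L₁ = η 0`) satisfying the distance-monotonicity
Assumption 1, obtained by splitting the double integral near the junction. -/
theorem vfInner_upper_bound_consecutive_edges
    {n : ℕ} (hn : 1 ≤ n) (L₁ L₂ : ℝ) (hL₁ : 0 < L₁) (hL₂ : 0 < L₂)
    (γ tγ η tη : ℝ → EuclideanSpace ℝ (Fin n))
    (hγderiv : ∀ s ∈ Icc (0:ℝ) L₁, HasDerivWithinAt γ (tγ s) (Icc 0 L₁) s)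
    (hηderiv : ∀ t ∈ Icc (0:ℝ) L₂, HasDerivWithinAt η (tη t) (Icc 0 L₂) t)
    (hγunit : ∀ s ∈ Icc (0:ℝ) L₁, ‖tγ s‖ = 1)
    (hηunit : ∀ t ∈ Icc (0:ℝ) L₂, ‖tη t‖ = 1)
    (hjoin : γ L₁ = η 0)
    -- Assumption 1: distance monotone in arc-length separation through the common node
    (hA1 : ∀ s ∈ Icc (0:ℝ) L₁, ∀ s' ∈ Icc (0:ℝ) L₁, ∀ t ∈ Icc (0:ℝ) L₂, ∀ t' ∈ Icc (0:ℝ) L₂,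
      (L₁ - s) + t ≤ (L₁ - s') + t' → ‖γ s - η t‖ ≤ ‖γ s' - η t'‖)
    (ε : ℝ) (hε0 : 0 < ε) (hεmin : ε ≤ min L₁ L₂) (σx σt : ℝ) (hσx : 0 < σx) (hσt : 0 < σt) :
    vfInner σx σt L₁ L₂ γ tγ η tη ≤
      ε ^ 2 + L₂ * ε * Real.exp (-‖γ L₁ - η ε‖ ^ 2 / σx ^ 2)
        + L₁ * ε * Real.exp (-‖γ (L₁ - ε) - γ L₁‖ ^ 2 / σx ^ 2)
        + L₁ * L₂ * Real.exp (-‖γ (L₁ - ε) - η ε‖ ^ 2 / σx ^ 2) := by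
  have hεL₁ : ε ≤ L₁ := hεmin.trans (min_le_left _ _)
  have hεL₂ : ε ≤ L₂ := hεmin.trans (min_le_right _ _)
  set f : ℝ → ℝ → ℝ := fun s t =>
    Real.exp (-‖γ s - η t‖ ^ 2 / σx ^ 2) * Real.exp (-‖tγ s - tη t‖ ^ 2 / σt ^ 2) with hfdef
  set E₁ : ℝ := Real.exp (-‖γ L₁ - η ε‖ ^ 2 / σx ^ 2) with hE₁def
  set E₂ : ℝ := Real.exp (-‖γ (L₁ - ε) - γ L₁‖ ^ 2 / σx ^ 2) with hE₂def
  set E₃ : ℝ := Real.exp (-‖γ (L₁ - ε) - η ε‖ ^ 2 / σx ^ 2) with hE₃def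
  have hE₁0 : 0 ≤ E₁ := (Real.exp_pos _).le
  have hE₂0 : 0 ≤ E₂ := (Real.exp_pos _).le
  have hE₃0 : 0 ≤ E₃ := (Real.exp_pos _).le
  have hσx2 : (0:ℝ) < σx ^ 2 := by positivity
  have hmemL₁ε : L₁ - ε ∈ Icc (0:ℝ) L₁ := ⟨by linarith, by linarith⟩
  have hmemL₁ : L₁ ∈ Icc (0:ℝ) L₁ := ⟨hL₁.le, le_refl _⟩
  have hmem0 : (0:ℝ) ∈ Icc (0:ℝ) L₂ := ⟨le_refl _, hL₂.le⟩
  have hmemε : ε ∈ Icc (0:ℝ) L₂ := ⟨hε0.le, hεL₂⟩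
  -- generic pointwise bounds
  have hf0 : ∀ s t, 0 ≤ f s t := fun s t => by positivity
  have hfexp : ∀ s t, f s t ≤ Real.exp (-‖γ s - η t‖ ^ 2 / σx ^ 2) := by
    intro s t
    have h1 : Real.exp (-‖tγ s - tη t‖ ^ 2 / σt ^ 2) ≤ 1 := by
      apply Real.exp_le_one_iff.mpr
      rw [neg_div]
      have : (0:ℝ) ≤ ‖tγ s - tη t‖ ^ 2 / σt ^ 2 := by positivity
      linarith
    calc f s t ≤ Real.exp (-‖γ s - η t‖ ^ 2 / σx ^ 2) * 1 :=
          mul_le_mul_of_nonneg_left h1 (Real.exp_pos _).le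
      _ = Real.exp (-‖γ s - η t‖ ^ 2 / σx ^ 2) := mul_one _
  have hf1 : ∀ s t, f s t ≤ 1 := by
    intro s t
    refine (hfexp s t).trans ?_
    apply Real.exp_le_one_iff.mpr
    rw [neg_div]
    have : (0:ℝ) ≤ ‖γ s - η t‖ ^ 2 / σx ^ 2 := by positivity
    linarith
  have hcmp : ∀ s ∈ Icc (0:ℝ) L₁, ∀ t ∈ Icc (0:ℝ) L₂, ∀ s' ∈ Icc (0:ℝ) L₁,
      ∀ t' ∈ Icc (0:ℝ) L₂, (L₁ - s') + t' ≤ (L₁ - s) + t →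
      f s t ≤ Real.exp (-‖γ s' - η t'‖ ^ 2 / σx ^ 2) := by
    intro s hs t ht s' hs' t' ht' hle
    refine (hfexp s t).trans (Real.exp_le_exp.mpr ?_)
    have hnorm : ‖γ s' - η t'‖ ≤ ‖γ s - η t‖ := hA1 s' hs' s hs t' ht' t ht hle
    have hsq : ‖γ s' - η t'‖ ^ 2 ≤ ‖γ s - η t‖ ^ 2 :=
      pow_le_pow_left₀ (norm_nonneg _) hnorm 2
    rw [neg_div, neg_div]
    exact neg_le_neg ((div_le_div_iff_of_pos_right hσx2).mpr hsq)
  -- specialized pointwise bounds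
  have hbd₁ : ∀ s ∈ Icc (0:ℝ) L₁, ∀ t ∈ Icc ε L₂, f s t ≤ E₁ := by
    intro s hs t ht
    exact hcmp s hs t ⟨hε0.le.trans ht.1, ht.2⟩ L₁ hmemL₁ ε hmemε (by
      have := hs.2; have := ht.1; linarith)
  have hbd₂ : ∀ s ∈ Icc (0:ℝ) (L₁ - ε), ∀ t ∈ Icc (0:ℝ) ε, f s t ≤ E₂ := by
    intro s hs t ht
    have hs' : s ∈ Icc (0:ℝ) L₁ := ⟨hs.1, by linarith [hs.2]⟩
    have ht' : t ∈ Icc (0:ℝ) L₂ := ⟨ht.1, ht.2.trans hεL₂⟩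
    have := hcmp s hs' t ht' (L₁ - ε) hmemL₁ε 0 hmem0 (by
      have := hs.2; have := ht.1; linarith)
    rw [hE₂def, hjoin]
    exact this
  have hbd₃ : ∀ s ∈ Icc (0:ℝ) (L₁ - ε), ∀ t ∈ Icc ε L₂, f s t ≤ E₃ := by
    intro s hs t ht
    have hs' : s ∈ Icc (0:ℝ) L₁ := ⟨hs.1, by linarith [hs.2]⟩
    have ht' : t ∈ Icc (0:ℝ) L₂ := ⟨hε0.le.trans ht.1, ht.2⟩
    exact hcmp s hs' t ht' (L₁ - ε) hmemL₁ε ε hmemε (by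
      have := hs.2; have := ht.1; linarith)
  -- inner integral bounds
  set F : ℝ → ℝ := fun s => ∫ t in (0:ℝ)..L₂, f s t with hFdef
  have hFsplit : ∀ s (c₁ c₂ : ℝ), 0 ≤ c₁ → 0 ≤ c₂ →
      (∀ t ∈ Icc (0:ℝ) ε, f s t ≤ c₁) → (∀ t ∈ Icc ε L₂, f s t ≤ c₂) →
      F s ≤ ε * c₁ + L₂ * c₂ := by
    intro s c₁ c₂ hc₁ hc₂ h₁ h₂
    by_cases hInt : IntervalIntegrable (f s) volume 0 L₂
    · have huIcc : uIcc (0:ℝ) ε ⊆ uIcc (0:ℝ) L₂ := by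
        rw [uIcc_of_le hε0.le, uIcc_of_le hL₂.le]
        exact Icc_subset_Icc (le_refl _) hεL₂
      have huIcc' : uIcc ε L₂ ⊆ uIcc (0:ℝ) L₂ := by
        rw [uIcc_of_le hεL₂, uIcc_of_le hL₂.le]
        exact Icc_subset_Icc hε0.le (le_refl _)
      have hI₁ : IntervalIntegrable (f s) volume 0 ε := hInt.mono_set huIcc
      have hI₂ : IntervalIntegrable (f s) volume ε L₂ := hInt.mono_set huIcc'
      have hsplit : F s = (∫ t in (0:ℝ)..ε, f s t) + ∫ t in ε..L₂, f s t :=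
        (intervalIntegral.integral_add_adjacent_intervals hI₁ hI₂).symm
      have hA : (∫ t in (0:ℝ)..ε, f s t) ≤ ∫ t in (0:ℝ)..ε, c₁ :=
        intervalIntegral.integral_mono_on hε0.le hI₁ intervalIntegrable_const h₁
      have hB : (∫ t in ε..L₂, f s t) ≤ ∫ t in ε..L₂, c₂ :=
        intervalIntegral.integral_mono_on hεL₂ hI₂ intervalIntegrable_const h₂
      rw [intervalIntegral.integral_const] at hA
      rw [intervalIntegral.integral_const] at hB
      simp only [smul_eq_mul] at hA hB
      have hcc : (L₂ - ε) * c₂ ≤ L₂ * c₂ := by nlinarith [mul_nonneg hε0.le hc₂]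
      calc F s ≤ (ε - 0) * c₁ + (L₂ - ε) * c₂ := by rw [hsplit]; exact add_le_add hA hB
        _ ≤ ε * c₁ + L₂ * c₂ := by linarith
    · have : F s = 0 := intervalIntegral.integral_undef hInt
      rw [this]; positivity
  have hFbot : ∀ s ∈ Icc (0:ℝ) (L₁ - ε), F s ≤ ε * E₂ + L₂ * E₃ := fun s hs =>
    hFsplit s E₂ E₃ hE₂0 hE₃0 (fun t ht => hbd₂ s hs t ht) (fun t ht => hbd₃ s hs t ht)
  have hFtop : ∀ s ∈ Icc (L₁ - ε) L₁, F s ≤ ε * 1 + L₂ * E₁ := fun s hs =>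
    hFsplit s 1 E₁ zero_le_one hE₁0 (fun t _ => hf1 s t)
      (fun t ht => hbd₁ s ⟨by linarith [hs.1], hs.2⟩ t ht)
  -- outer integral
  have hvf : vfInner σx σt L₁ L₂ γ tγ η tη = ∫ s in (0:ℝ)..L₁, F s := rfl
  rw [hvf]
  by_cases hInt : IntervalIntegrable F volume 0 L₁
  · have huIcc : uIcc (0:ℝ) (L₁ - ε) ⊆ uIcc (0:ℝ) L₁ := by
      rw [uIcc_of_le (by linarith : (0:ℝ) ≤ L₁ - ε), uIcc_of_le hL₁.le]
      exact Icc_subset_Icc (le_refl _) (by linarith)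
    have huIcc' : uIcc (L₁ - ε) L₁ ⊆ uIcc (0:ℝ) L₁ := by
      rw [uIcc_of_le (by linarith : L₁ - ε ≤ L₁), uIcc_of_le hL₁.le]
      exact Icc_subset_Icc (by linarith) (le_refl _)
    have hI₁ : IntervalIntegrable F volume 0 (L₁ - ε) := hInt.mono_set huIcc
    have hI₂ : IntervalIntegrable F volume (L₁ - ε) L₁ := hInt.mono_set huIcc'
    have hsplit : (∫ s in (0:ℝ)..L₁, F s)
        = (∫ s in (0:ℝ)..(L₁ - ε), F s) + ∫ s in (L₁ - ε)..L₁, F s :=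
      (intervalIntegral.integral_add_adjacent_intervals hI₁ hI₂).symm
    have hA : (∫ s in (0:ℝ)..(L₁ - ε), F s) ≤ ∫ s in (0:ℝ)..(L₁ - ε), (ε * E₂ + L₂ * E₃) :=
      intervalIntegral.integral_mono_on (by linarith) hI₁ intervalIntegrable_const hFbot
    have hB : (∫ s in (L₁ - ε)..L₁, F s) ≤ ∫ s in (L₁ - ε)..L₁, (ε * 1 + L₂ * E₁) :=
      intervalIntegral.integral_mono_on (by linarith) hI₂ intervalIntegrable_const hFtop
    rw [intervalIntegral.integral_const] at hA
    rw [intervalIntegral.integral_const] at hB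
    simp only [smul_eq_mul] at hA hB
    rw [hsplit]
    have h1 : (L₁ - ε - 0) * (ε * E₂ + L₂ * E₃) ≤ L₁ * ε * E₂ + L₁ * L₂ * E₃ := by
      nlinarith [mul_nonneg (mul_nonneg hε0.le hε0.le) hE₂0,
        mul_nonneg (mul_nonneg hε0.le hL₂.le) hE₃0]
    have h2 : (L₁ - (L₁ - ε)) * (ε * 1 + L₂ * E₁) = ε ^ 2 + L₂ * ε * E₁ := by ring
    linarith [hA, hB]
  · rw [intervalIntegral.integral_undef hInt]
    positivity
end

section
/- Let n ≥ 1, and let γ : [0, L₁] → ℝⁿ and η : [0, L₂] → ℝⁿ (L₁, L₂ > 0) be unit-speed C¹ curves with γ(0) = η(0), satisfying the tangent monotonicity assumption: for all s, s' ∈ [0, L₁] and t, t' ∈ [0, L₂], if s + t ≤ s' + t' then ‖γ'(s) − η'(t)‖ ≤ ‖γ'(s') − η'(t')‖. Then for every ε with 0 < ε ≤ min(L₁, L₂) and all σ_x, σ_t > 0, ⟨μ_γ, μ_η⟩ ≤ ε² + L₂·ε·exp(−‖γ'(0) − η'(ε)‖²/σ_t²) + L₁·ε·exp(−‖γ'(ε)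 − η'(0)‖²/σ_t²) + L₁·L₂·exp(−‖γ'(ε) − η'(ε)‖²/σ_t²). -/
open Set MeasureTheory

/-!
Near the branching point the integrand is bounded by `1`. Away from it, on each of the three
other blocks of `[0, L₁] × [0, L₂]` cut out by `s = ε` and `t = ε`, Assumption 2 bounds the
tangent distance from below by its value at the corner of the block closest to the origin, which
bounds the tangent Gaussian from above; the spatial Gaussian is at most `1`. Integrating these
block-wise constants gives the bound.
-/

namespace Real

lemma exp_neg_div_le_one {a b : ℝ} (ha : 0 ≤ a) (hb : 0 ≤ b) : exp (-a / b) ≤ 1 :=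
  exp_le_one_iff.2 (div_nonpos_of_nonpos_of_nonneg (neg_nonpos.2 ha) hb)

lemma exp_neg_sq_div_le_of_le {x y : ℝ} (σ : ℝ) (hy : 0 ≤ y) (hyx : y ≤ x) :
    exp (-x ^ 2 / σ ^ 2) ≤ exp (-y ^ 2 / σ ^ 2) := by
  gcongr

end Real

lemma integrableOn_Ioc_step (a b c x d : ℝ) :
    IntegrableOn (fun t => if t ≤ c then a else b) (Ioc x d) := by
  refine Measure.integrableOn_of_bounded (M := max |a| |b|) measure_Ioc_lt_top.ne
    (Measurable.ite measurableSet_Iic measurable_const measurable_const).aestronglyMeasurable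
    (.of_forall fun t => ?_)
  split_ifs <;> simp

lemma setIntegral_Ioc_step (a b : ℝ) {x c d : ℝ} (hxc : x ≤ c) (hcd : c ≤ d) :
    ∫ t in Ioc x d, (if t ≤ c then a else b) = (c - x) * a + (d - c) * b := by
  have hleft : EqOn (fun t => if t ≤ c then a else b) (fun _ => a) (Ioc x c) :=
    fun t ht => if_pos ht.2
  have hright : EqOn (fun t => if t ≤ c then a else b) (fun _ => b) (Ioc c d) :=
    fun t ht => if_neg (not_le.2 ht.1)
  rw [← Ioc_union_Ioc_eq_Ioc hxc hcd,
    setIntegral_union (Ioc_disjoint_Ioc_of_le le_rfl) measurableSet_Ioc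
      (integrableOn_Ioc_step a b c x c) (integrableOn_Ioc_step a b c c d),
    setIntegral_congr_fun measurableSet_Ioc hleft, setIntegral_congr_fun measurableSet_Ioc hright]
  simp [Real.volume_real_Ioc_of_le hxc, Real.volume_real_Ioc_of_le hcd]

lemma intervalIntegral_le_of_le_step {f : ℝ → ℝ} {a b x c d : ℝ} (hxc : x ≤ c) (hcd : c ≤ d)
    (hf₀ : ∀ t, 0 ≤ f t) (hf : ∀ t ∈ Ioc x d, f t ≤ if t ≤ c then a else b) :
    ∫ t in x..d, f t ≤ (c - x) * a + (d - c) * b := by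
  rw [intervalIntegral.integral_of_le (hxc.trans hcd), ← setIntegral_Ioc_step a b hxc hcd]
  exact integral_mono_of_nonneg (.of_forall hf₀) (integrableOn_Ioc_step a b c x d)
    ((ae_restrict_iff' measurableSet_Ioc).2 (.of_forall hf))

lemma intervalIntegral_intervalIntegral_le_of_le_blocks {f : ℝ → ℝ → ℝ}
    {ε₁ ε₂ L₁ L₂ c₀₀ c₀₁ c₁₀ c₁₁ : ℝ} (hε₁ : 0 ≤ ε₁) (hε₂ : 0 ≤ ε₂) (h₁ : ε₁ ≤ L₁) (h₂ : ε₂ ≤ L₂)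
    (hf₀ : ∀ s t, 0 ≤ f s t)
    (hf : ∀ s ∈ Ioc 0 L₁, ∀ t ∈ Ioc 0 L₂,
      f s t ≤ if s ≤ ε₁ then (if t ≤ ε₂ then c₀₀ else c₀₁) else (if t ≤ ε₂ then c₁₀ else c₁₁)) :
    ∫ s in 0..L₁, ∫ t in 0..L₂, f s t ≤
      ε₁ * (ε₂ * c₀₀ + (L₂ - ε₂) * c₀₁) + (L₁ - ε₁) * (ε₂ * c₁₀ + (L₂ - ε₂) * c₁₁) := by
  have hinner : ∀ s ∈ Ioc 0 L₁, ∫ t in 0..L₂, f s t ≤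
      if s ≤ ε₁ then ε₂ * c₀₀ + (L₂ - ε₂) * c₀₁ else ε₂ * c₁₀ + (L₂ - ε₂) * c₁₁ := by
    intro s hs
    split_ifs with hs₁ <;>
      simpa using intervalIntegral_le_of_le_step hε₂ h₂ (hf₀ s) fun t ht => by
        simpa [hs₁] using hf s hs t ht
  simpa using intervalIntegral_le_of_le_step hε₁ h₁
    (fun s => intervalIntegral.integral_nonneg (hε₂.trans h₂) fun t _ => hf₀ s t) hinner

theorem vfInner_upper_bound_branching_edges_general
    {n : ℕ} (L₁ L₂ : ℝ)
    (γ tγ η tη : ℝ → EuclideanSpace ℝ (Fin n))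
    -- Assumption 2: tangent distance monotone in total arc length from the branching point
    (hA2 : ∀ s ∈ Icc (0:ℝ) L₁, ∀ s' ∈ Icc (0:ℝ) L₁, ∀ t ∈ Icc (0:ℝ) L₂, ∀ t' ∈ Icc (0:ℝ) L₂,
      s + t ≤ s' + t' → ‖tγ s - tη t‖ ≤ ‖tγ s' - tη t'‖)
    (ε : ℝ) (hε0 : 0 < ε) (hεmin : ε ≤ min L₁ L₂) (σx σt : ℝ) :
    vfInner σx σt L₁ L₂ γ tγ η tη ≤
      ε ^ 2 + L₂ * ε * Real.exp (-‖tγ 0 - tη ε‖ ^ 2 / σt ^ 2)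
        + L₁ * ε * Real.exp (-‖tγ ε - tη 0‖ ^ 2 / σt ^ 2)
        + L₁ * L₂ * Real.exp (-‖tγ ε - tη ε‖ ^ 2 / σt ^ 2) := by
  obtain ⟨hεL₁, hεL₂⟩ := le_min_iff.1 hεmin
  set E : ℝ → ℝ → ℝ := fun s t => Real.exp (-‖tγ s - tη t‖ ^ 2 / σt ^ 2)
  have hE_anti : ∀ a ∈ Icc 0 L₁, ∀ b ∈ Icc 0 L₂, ∀ s ∈ Ioc 0 L₁, ∀ t ∈ Ioc 0 L₂,
      a + b ≤ s + t → E s t ≤ E a b := fun a ha b hb s hs t ht hab =>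
    Real.exp_neg_sq_div_le_of_le σt (norm_nonneg _)
      (hA2 a ha s (Ioc_subset_Icc_self hs) b hb t (Ioc_subset_Icc_self ht) hab)
  have hspatial : ∀ s t, Real.exp (-‖γ s - η t‖ ^ 2 / σx ^ 2) ≤ 1 := fun s t =>
    Real.exp_neg_div_le_one (by positivity) (by positivity)
  have h0 : ∀ {L : ℝ}, ε ≤ L → (0 : ℝ) ∈ Icc 0 L := fun h => ⟨le_rfl, hε0.le.trans h⟩
  have hε : ∀ {L : ℝ}, ε ≤ L → ε ∈ Icc 0 L := fun h => ⟨hε0.le, h⟩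
  refine (intervalIntegral_intervalIntegral_le_of_le_blocks (c₀₀ := 1) (c₀₁ := E 0 ε)
    (c₁₀ := E ε 0) (c₁₁ := E ε ε) hε0.le hε0.le hεL₁ hεL₂ (fun s t => by positivity)
    fun s hs t ht => ?_).trans ?_
  · refine (mul_le_of_le_one_left (by positivity) (hspatial s t)).trans ?_
    split_ifs with hs₁ ht₁ ht₁
    · exact Real.exp_neg_div_le_one (by positivity) (by positivity)
    · exact hE_anti 0 (h0 hεL₁) ε (hε hεL₂) s hs t ht (by linarith [hs.1])
    · exact hE_anti ε (hε hεL₁) 0 (h0 hεL₂) s hs t ht (by linarith [ht.1])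
    · exact hE_anti ε (hε hεL₁) ε (hε hεL₂) s hs t ht (by linarith)
  · show _ ≤ ε ^ 2 + L₂ * ε * E 0 ε + L₁ * ε * E ε 0 + L₁ * L₂ * E ε ε
    have hE₀ε : 0 ≤ ε * ε * E 0 ε := by positivity
    have hEε₀ : 0 ≤ ε * ε * E ε 0 := by positivity
    have hEεε : 0 ≤ ε * (L₁ - ε + L₂) * E ε ε :=
      mul_nonneg (mul_nonneg hε0.le (by linarith)) (by positivity)
    linear_combination hE₀ε + hEε₀ + hEεε

/-- Explicit upper bound on the cross inner product of two branching edges `γ`, `η`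
(unit-speed C¹ curves with common starting point `γ 0 = η 0`) satisfying the tangent-distance
monotonicity Assumption 2, obtained by splitting the double integral near the branching point. -/
theorem vfInner_upper_bound_branching_edges
    {n : ℕ} (hn : 1 ≤ n) (L₁ L₂ : ℝ) (hL₁ : 0 < L₁) (hL₂ : 0 < L₂)
    (γ tγ η tη : ℝ → EuclideanSpace ℝ (Fin n))
    (hγderiv : ∀ s ∈ Icc (0:ℝ) L₁, HasDerivWithinAt γ (tγ s) (Icc 0 L₁) s)
    (hηderiv : ∀ t ∈ Icc (0:ℝ) L₂, HasDerivWithinAt η (tη t) (Icc 0 L₂) t)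
    (hγunit : ∀ s ∈ Icc (0:ℝ) L₁, ‖tγ s‖ = 1)
    (hηunit : ∀ t ∈ Icc (0:ℝ) L₂, ‖tη t‖ = 1)
    (hjoin : γ 0 = η 0)
    -- Assumption 2: tangent distance monotone in total arc length from the branching point
    (hA2 : ∀ s ∈ Icc (0:ℝ) L₁, ∀ s' ∈ Icc (0:ℝ) L₁, ∀ t ∈ Icc (0:ℝ) L₂, ∀ t' ∈ Icc (0:ℝ) L₂,
      s + t ≤ s' + t' → ‖tγ s - tη t‖ ≤ ‖tγ s' - tη t'‖)
    (ε : ℝ) (hε0 : 0 < ε) (hεmin : ε ≤ min L₁ L₂) (σx σt : ℝ) (hσx : 0 < σx) (hσt : 0 < σt) :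
    vfInner σx σt L₁ L₂ γ tγ η tη ≤
      ε ^ 2 + L₂ * ε * Real.exp (-‖tγ 0 - tη ε‖ ^ 2 / σt ^ 2)
        + L₁ * ε * Real.exp (-‖tγ ε - tη 0‖ ^ 2 / σt ^ 2)
        + L₁ * L₂ * Real.exp (-‖tγ ε - tη ε‖ ^ 2 / σt ^ 2) :=
  vfInner_upper_bound_branching_edges_general L₁ L₂ γ tγ η tη hA2 ε hε0 hεmin σx σt
end

section
/- Let n ≥ 1, fix σ_x, σ_t > 0, and let X : [0, L₁] → ℝⁿ and Y : [0, L₂] → ℝⁿ be C¹ regular curves (‖X'(s)‖ > 0 and ‖Y'(t)‖ > 0 for all s, t). For a C¹ map φ : ℝⁿ → ℝⁿ, let φ.Y denote the curve t ↦ φ(Y(t)). Then the squared varifold distance is continuous at the identity with respect to C¹-small perturbations: for every ε > 0 there exists δ > 0 such that for every C¹ map φ : ℝⁿ → ℝⁿ with sup_{x ∈ ℝⁿ} ‖φ(x) − x‖ < δ and sup_{x ∈ ℝⁿ} ‖Dφ(x) − I‖ < δ (operator/Frobenius norm), one has |d²(X, φ.Y) − d²(X, Y)| < ε, where for δ < 1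 the curve φ.Y is again regular since ‖(φ∘Y)'(t)‖ = ‖Dφ(Y(t))·Y'(t)‖ ≥ (1 − δ)‖Y'(t)‖ > 0. -/
open Set MeasureTheory

/-- The parameterization-invariant Gaussian oriented-varifold inner product of two C¹ regular
curves `α : [0, L₁] → ℝⁿ` and `β : [0, L₂] → ℝⁿ`, given together with their derivative fields
`α'`, `β'` (the unit tangent being `α'/‖α'‖`) and kernel widths `σx`, `σt`. -/
noncomputable def vfInnerR {n : ℕ} (σx σt L₁ L₂ : ℝ)
    (α α' β β' : ℝ → EuclideanSpace ℝ (Fin n)) : ℝ :=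
  ∫ s in (0:ℝ)..L₁, ∫ t in (0:ℝ)..L₂,
    Real.exp (-‖α s - β t‖ ^ 2 / σx ^ 2) *
      Real.exp (-‖‖α' s‖⁻¹ • α' s - ‖β' t‖⁻¹ • β' t‖ ^ 2 / σt ^ 2) * (‖α' s‖ * ‖β' t‖)

/-- The squared varifold distance `d²(α, β) = ‖μ_α‖² − 2⟨μ_α, μ_β⟩ + ‖μ_β‖²`. -/
noncomputable def vfDistSq {n : ℕ} (σx σt L₁ L₂ : ℝ)
    (α α' β β' : ℝ → EuclideanSpace ℝ (Fin n)) : ℝ :=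
  vfInnerR σx σt L₁ L₁ α α' α α' - 2 * vfInnerR σx σt L₁ L₂ α α' β β'
    + vfInnerR σx σt L₂ L₂ β β' β β'

/-! The kernel integrated in `vfInnerR` is continuous wherever both tangent vectors are non-zero,
hence uniformly continuous near the compact set of position–velocity pairs traced by `X` and `Y`.
A deformation with `‖φ - id‖ < δ` and `‖Dφ - I‖ < δ` moves `(Y t, Y' t)` to
`(φ (Y t), Dφ (Y t) (Y' t))`, at distance `O(δ)` uniformly in `t`; so the integrands of the cross
and self terms of `d²` change uniformly little on the parameter rectangles, and so do the
integrals. -/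

theorem IsCompact.exists_forall_dist_lt_of_continuousAt {α β : Type*} [PseudoMetricSpace α]
    [PseudoMetricSpace β] {s : Set α} (hs : IsCompact s) {f : α → β}
    (hf : ∀ a ∈ s, ContinuousAt f a) {ε : ℝ} (hε : 0 < ε) :
    ∃ δ > 0, ∀ a ∈ s, ∀ b, dist a b < δ → dist (f a) (f b) < ε := by
  obtain ⟨δ, hδ, h⟩ := Metric.mem_uniformity_dist.1
    (hs.uniformContinuousAt_of_continuousAt f hf (Metric.dist_mem_uniformity hε))
  exact ⟨δ, hδ, fun a ha b hab => h hab ha⟩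

theorem abs_intervalIntegral_intervalIntegral_sub_le {a b c d C : ℝ} (hab : a ≤ b) (hcd : c ≤ d)
    {f g : ℝ × ℝ → ℝ} (hf : ContinuousOn f (Icc a b ×ˢ Icc c d))
    (hg : ContinuousOn g (Icc a b ×ˢ Icc c d))
    (hfg : ∀ p ∈ Icc a b ×ˢ Icc c d, |f p - g p| ≤ C) :
    |(∫ s in a..b, ∫ t in c..d, f (s, t)) - ∫ s in a..b, ∫ t in c..d, g (s, t)|
      ≤ C * ((b - a) * (d - c)) := by
  have hsub : Ioc a b ×ˢ Ioc c d ⊆ Icc a b ×ˢ Icc c d :=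
    prod_mono Ioc_subset_Icc_self Ioc_subset_Icc_self
  have hint : ∀ h : ℝ × ℝ → ℝ, ContinuousOn h (Icc a b ×ˢ Icc c d) →
      IntegrableOn h (Ioc a b ×ˢ Ioc c d) :=
    fun h hh => (hh.integrableOn_compact (isCompact_Icc.prod isCompact_Icc)).mono_set hsub
  have hfubini : ∀ h : ℝ × ℝ → ℝ, ContinuousOn h (Icc a b ×ˢ Icc c d) →
      ∫ s in a..b, ∫ t in c..d, h (s, t) = ∫ p in Ioc a b ×ˢ Ioc c d, h p := fun h hh => by
    simp only [intervalIntegral.integral_of_le hab, intervalIntegral.integral_of_le hcd]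
    rw [Measure.volume_eq_prod, setIntegral_prod _ (hint h hh)]
  rw [hfubini f hf, hfubini g hg, ← integral_sub (hint f hf) (hint g hg)]
  have hvol : volume.real (Ioc a b ×ˢ Ioc c d) = (b - a) * (d - c) := by
    rw [Measure.volume_eq_prod, measureReal_def, Measure.prod_prod]
    simp [hab, hcd]
  rw [← hvol]
  exact norm_setIntegral_le_of_norm_le_const
    ((measure_mono hsub).trans_lt (isCompact_Icc.prod isCompact_Icc).measure_lt_top)
    fun p hp => (Real.norm_eq_abs _).trans_le (hfg p (hsub hp))

section

variable {E : Type*} [NormedAddCommGroup E] [NormedSpace ℝ E]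

noncomputable def vfKernel (σx σt : ℝ) (x y : E × E) : ℝ :=
  Real.exp (-‖x.1 - y.1‖ ^ 2 / σx ^ 2) *
    Real.exp (-‖‖x.2‖⁻¹ • x.2 - ‖y.2‖⁻¹ • y.2‖ ^ 2 / σt ^ 2) * (‖x.2‖ * ‖y.2‖)

theorem continuousAt_vfKernel (σx σt : ℝ) {x y : E × E} (hx : x.2 ≠ 0) (hy : y.2 ≠ 0) :
    ContinuousAt (Function.uncurry (vfKernel σx σt)) (x, y) := by
  unfold vfKernel Function.uncurry
  fun_prop (disch := simp [hx, hy])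

theorem IsCompact.exists_forall_abs_vfKernel_sub_lt (σx σt : ℝ) {T : Set (E × E)}
    (hT : IsCompact T) (hT0 : ∀ x ∈ T, x.2 ≠ 0) {ε : ℝ} (hε : 0 < ε) :
    ∃ η > 0, ∀ x ∈ T, ∀ y ∈ T, ∀ x' y', dist x x' < η → dist y y' < η →
      |vfKernel σx σt x y - vfKernel σx σt x' y'| < ε := by
  obtain ⟨η, hη, h⟩ := (hT.prod hT).exists_forall_dist_lt_of_continuousAt
    (fun z hz => continuousAt_vfKernel σx σt (hT0 _ hz.1) (hT0 _ hz.2)) hε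
  refine ⟨η, hη, fun x hx y hy x' y' hxx' hyy' => ?_⟩
  simpa only [Real.dist_eq, Function.uncurry_apply_pair] using
    h (x, y) ⟨hx, hy⟩ (x', y') (by rw [Prod.dist_eq]; exact max_lt hxx' hyy')

/-- `α'` stands for the velocity of `α`; only its continuity and non-vanishing are recorded. -/
def IsRegularCurveOn (α α' : ℝ → E) (s : Set ℝ) : Prop :=
  ContinuousOn (fun t => (α t, α' t)) s ∧ ∀ t ∈ s, α' t ≠ 0

theorem isRegularCurveOn_of_hasDerivWithinAt {α α' : ℝ → E} {s : Set ℝ}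
    (hα : ∀ t ∈ s, HasDerivWithinAt α (α' t) s t) (hα' : ContinuousOn α' s)
    (hreg : ∀ t ∈ s, 0 < ‖α' t‖) : IsRegularCurveOn α α' s :=
  ⟨ContinuousOn.prodMk (fun t ht => (hα t ht).continuousWithinAt) hα',
    fun t ht => norm_pos_iff.1 (hreg t ht)⟩

theorem ContinuousLinearMap.apply_ne_zero_of_norm_sub_id_lt_one {f : E →L[ℝ] E}
    (hf : ‖f - ContinuousLinearMap.id ℝ E‖ < 1) {v : E} (hv : v ≠ 0) : f v ≠ 0 := by
  intro h
  have : ‖f v - v‖ ≤ ‖f - ContinuousLinearMap.id ℝ E‖ * ‖v‖ :=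
    (f - ContinuousLinearMap.id ℝ E).le_opNorm v
  rw [h, zero_sub, norm_neg] at this
  nlinarith [norm_pos_iff.2 hv]

theorem IsRegularCurveOn.comp_of_norm_fderiv_sub_id_lt_one {α α' : ℝ → E} {s : Set ℝ}
    (hα : IsRegularCurveOn α α' s) {φ : E → E} (hφ : ContDiff ℝ 1 φ)
    (hDφ : ∀ x, ‖fderiv ℝ φ x - ContinuousLinearMap.id ℝ E‖ < 1) :
    IsRegularCurveOn (fun t => φ (α t)) (fun t => fderiv ℝ φ (α t) (α' t)) s := by
  have hpos : ContinuousOn α s := hα.1.fst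
  refine ⟨(hφ.continuous.comp_continuousOn hpos).prodMk ?_, fun t ht =>
    (fderiv ℝ φ (α t)).apply_ne_zero_of_norm_sub_id_lt_one (hDφ _) (hα.2 t ht)⟩
  exact ((hφ.continuous_fderiv one_ne_zero).comp_continuousOn hpos).clm_apply hα.1.snd

theorem continuousOn_vfKernel_comp (σx σt : ℝ) {α α' β β' : ℝ → E} {s t : Set ℝ}
    (hα : IsRegularCurveOn α α' s) (hβ : IsRegularCurveOn β β' t) :
    ContinuousOn (fun p : ℝ × ℝ => vfKernel σx σt (α p.1, α' p.1) (β p.2, β' p.2)) (s ×ˢ t) := by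
  intro p hp
  have hcurves : ContinuousOn (fun p : ℝ × ℝ => ((α p.1, α' p.1), (β p.2, β' p.2))) (s ×ˢ t) :=
    (hα.1.comp continuousOn_fst fun _ h => h.1).prodMk
      (hβ.1.comp continuousOn_snd fun _ h => h.2)
  exact ContinuousAt.comp_continuousWithinAt (g := Function.uncurry (vfKernel σx σt))
    (f := fun p : ℝ × ℝ => ((α p.1, α' p.1), (β p.2, β' p.2)))
    (continuousAt_vfKernel σx σt (hα.2 _ hp.1) (hβ.2 _ hp.2)) (hcurves p hp)

theorem dist_prod_fderiv_le {φ : E → E} {δ : ℝ} (hφ : ∀ x, ‖φ x - x‖ < δ)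
    (hDφ : ∀ x, ‖fderiv ℝ φ x - ContinuousLinearMap.id ℝ E‖ < δ) (p v : E) :
    dist (p, v) (φ p, fderiv ℝ φ p v) ≤ δ * max 1 ‖v‖ := by
  have hδ : 0 ≤ δ := (norm_nonneg _).trans (hφ p).le
  rw [Prod.dist_eq, dist_comm p, dist_comm v, dist_eq_norm, dist_eq_norm]
  refine max_le ((hφ p).le.trans (le_mul_of_one_le_right hδ (le_max_left _ _))) ?_
  exact ((fderiv ℝ φ p - ContinuousLinearMap.id ℝ E).le_opNorm v).trans
    (mul_le_mul (hDφ p).le (le_max_right _ _) (norm_nonneg _) hδ)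

end

theorem vfInnerR_eq_integral_vfKernel {n : ℕ} (σx σt L₁ L₂ : ℝ)
    (α α' β β' : ℝ → EuclideanSpace ℝ (Fin n)) :
    vfInnerR σx σt L₁ L₂ α α' β β' =
      ∫ s in (0:ℝ)..L₁, ∫ t in (0:ℝ)..L₂, vfKernel σx σt (α s, α' s) (β t, β' t) := rfl

theorem abs_vfInnerR_sub_le {n : ℕ} {σx σt L₁ L₂ c : ℝ} (hL₁ : 0 ≤ L₁) (hL₂ : 0 ≤ L₂)
    {α α' β β' α₂ α₂' β₂ β₂' : ℝ → EuclideanSpace ℝ (Fin n)}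
    (hα : IsRegularCurveOn α α' (Icc 0 L₁)) (hβ : IsRegularCurveOn β β' (Icc 0 L₂))
    (hα₂ : IsRegularCurveOn α₂ α₂' (Icc 0 L₁)) (hβ₂ : IsRegularCurveOn β₂ β₂' (Icc 0 L₂))
    (hc : ∀ s ∈ Icc 0 L₁, ∀ t ∈ Icc 0 L₂, |vfKernel σx σt (α s, α' s) (β t, β' t)
      - vfKernel σx σt (α₂ s, α₂' s) (β₂ t, β₂' t)| ≤ c) :
    |vfInnerR σx σt L₁ L₂ α α' β β' - vfInnerR σx σt L₁ L₂ α₂ α₂' β₂ β₂'| ≤ c * (L₁ * L₂) := by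
  rw [vfInnerR_eq_integral_vfKernel, vfInnerR_eq_integral_vfKernel]
  simpa only [sub_zero] using abs_intervalIntegral_intervalIntegral_sub_le hL₁ hL₂
    (continuousOn_vfKernel_comp σx σt hα hβ) (continuousOn_vfKernel_comp σx σt hα₂ hβ₂)
    fun p hp => hc p.1 hp.1 p.2 hp.2

theorem exists_forall_abs_vfDistSq_sub_lt {n : ℕ} (σx σt : ℝ) {L₁ L₂ : ℝ} (hL₁ : 0 ≤ L₁)
    (hL₂ : 0 ≤ L₂) {X X' Y Y' : ℝ → EuclideanSpace ℝ (Fin n)}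
    (hX : IsRegularCurveOn X X' (Icc 0 L₁)) (hY : IsRegularCurveOn Y Y' (Icc 0 L₂))
    {ε : ℝ} (hε : 0 < ε) :
    ∃ η > 0, ∀ Z Z' : ℝ → EuclideanSpace ℝ (Fin n), IsRegularCurveOn Z Z' (Icc 0 L₂) →
      (∀ t ∈ Icc 0 L₂, dist (Y t, Y' t) (Z t, Z' t) < η) →
      |vfDistSq σx σt L₁ L₂ X X' Z Z' - vfDistSq σx σt L₁ L₂ X X' Y Y'| < ε := by
  set T := (fun s => (X s, X' s)) '' Icc 0 L₁ ∪ (fun t => (Y t, Y' t)) '' Icc 0 L₂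
  have hT : IsCompact T :=
    (isCompact_Icc.image_of_continuousOn hX.1).union (isCompact_Icc.image_of_continuousOn hY.1)
  have hT0 : ∀ x ∈ T, x.2 ≠ 0 := by
    rintro _ (⟨s, hs, rfl⟩ | ⟨t, ht, rfl⟩)
    exacts [hX.2 s hs, hY.2 t ht]
  have hXT : ∀ s ∈ Icc 0 L₁, (X s, X' s) ∈ T := fun s hs => .inl ⟨s, hs, rfl⟩
  have hYT : ∀ t ∈ Icc 0 L₂, (Y t, Y' t) ∈ T := fun t ht => .inr ⟨t, ht, rfl⟩
  set K := 2 * (L₁ * L₂) + L₂ * L₂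
  obtain ⟨η, hη, hker⟩ :=
    hT.exists_forall_abs_vfKernel_sub_lt σx σt hT0 (div_pos hε (by positivity : 0 < K + 1))
  refine ⟨η, hη, fun Z Z' hZ hYZ => ?_⟩
  have hcross := abs_vfInnerR_sub_le (σx := σx) (σt := σt) hL₁ hL₂ hX hY hX hZ
    fun s hs t ht => (hker _ (hXT s hs) _ (hYT t ht) _ _ (by rwa [dist_self]) (hYZ t ht)).le
  have hself := abs_vfInnerR_sub_le (σx := σx) (σt := σt) hL₂ hL₂ hY hY hZ hZ
    fun t ht t' ht' => (hker _ (hYT t ht) _ (hYT t' ht') _ _ (hYZ t ht) (hYZ t' ht')).le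
  calc |vfDistSq σx σt L₁ L₂ X X' Z Z' - vfDistSq σx σt L₁ L₂ X X' Y Y'|
      = |2 * (vfInnerR σx σt L₁ L₂ X X' Y Y' - vfInnerR σx σt L₁ L₂ X X' Z Z')
          - (vfInnerR σx σt L₂ L₂ Y Y' Y Y' - vfInnerR σx σt L₂ L₂ Z Z' Z Z')| := by
        unfold vfDistSq; ring_nf
    _ ≤ 2 * |vfInnerR σx σt L₁ L₂ X X' Y Y' - vfInnerR σx σt L₁ L₂ X X' Z Z'|
          + |vfInnerR σx σt L₂ L₂ Y Y' Y Y' - vfInnerR σx σt L₂ L₂ Z Z' Z Z'| := by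
        refine (abs_sub _ _).trans ?_
        rw [abs_mul, abs_two]
    _ ≤ ε / (K + 1) * K := by linarith
    _ < ε := by
        rw [div_mul_eq_mul_div, div_lt_iff₀ (by positivity)]
        nlinarith

theorem vfDistSq_robust_to_small_deformations_general
    {n : ℕ} (σx σt : ℝ)
    (L₁ L₂ : ℝ) (hL₁ : 0 < L₁) (hL₂ : 0 < L₂)
    (X X' Y Y' : ℝ → EuclideanSpace ℝ (Fin n))
    (hXderiv : ∀ s ∈ Icc (0:ℝ) L₁, HasDerivWithinAt X (X' s) (Icc 0 L₁) s)
    (hYderiv : ∀ t ∈ Icc (0:ℝ) L₂, HasDerivWithinAt Y (Y' t) (Icc 0 L₂) t)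
    (hXcont : ContinuousOn X' (Icc 0 L₁))
    (hYcont : ContinuousOn Y' (Icc 0 L₂))
    (hXreg : ∀ s ∈ Icc (0:ℝ) L₁, 0 < ‖X' s‖)
    (hYreg : ∀ t ∈ Icc (0:ℝ) L₂, 0 < ‖Y' t‖) :
    ∀ ε : ℝ, 0 < ε → ∃ δ : ℝ, 0 < δ ∧ δ < 1 ∧
      ∀ φ : EuclideanSpace ℝ (Fin n) → EuclideanSpace ℝ (Fin n), ContDiff ℝ 1 φ →
        (∀ x, ‖φ x - x‖ < δ) →
        (∀ x, ‖fderiv ℝ φ x - ContinuousLinearMap.id ℝ (EuclideanSpace ℝ (Fin n))‖ < δ) →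
        |vfDistSq σx σt L₁ L₂ X X' (fun t => φ (Y t)) (fun t => fderiv ℝ φ (Y t) (Y' t))
          - vfDistSq σx σt L₁ L₂ X X' Y Y'| < ε := by
  intro ε hε
  have hY := isRegularCurveOn_of_hasDerivWithinAt hYderiv hYcont hYreg
  obtain ⟨η, hη, hclose⟩ := exists_forall_abs_vfDistSq_sub_lt σx σt hL₁.le hL₂.le
    (isRegularCurveOn_of_hasDerivWithinAt hXderiv hXcont hXreg) hY hε
  obtain ⟨C, hC⟩ := isCompact_Icc.exists_bound_of_continuousOn hYcont
  set B := max 1 C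
  have hB : 0 < B := one_pos.trans_le (le_max_left _ _)
  set δ := min (1 / 2) (η / (2 * B))
  have hδ : 0 < δ := by positivity
  have hδ1 : δ < 1 := (min_le_left _ _).trans_lt (by norm_num)
  refine ⟨δ, hδ, hδ1, fun φ hφ hφid hDφ => hclose _ _ ?_ fun t ht => ?_⟩
  · exact hY.comp_of_norm_fderiv_sub_id_lt_one hφ fun x => (hDφ x).trans hδ1
  calc dist (Y t, Y' t) (φ (Y t), fderiv ℝ φ (Y t) (Y' t)) ≤ δ * max 1 ‖Y' t‖ :=
        dist_prod_fderiv_le hφid hDφ _ _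
    _ ≤ η / (2 * B) * B := mul_le_mul (min_le_right _ _) (max_le_max_left 1 (hC t ht))
        (by positivity) (by positivity)
    _ < η := by
        rw [div_mul_eq_mul_div, div_lt_iff₀ (by positivity)]
        nlinarith

/-- Robustness of the squared varifold distance to small diffeomorphic deformations:
`d²(X, φ.Y) → d²(X, Y)` as `‖φ − id‖_∞ → 0` and `‖Dφ − I‖_∞ → 0`, for C¹ regular curves
`X`, `Y` and C¹ maps `φ : ℝⁿ → ℝⁿ`. -/
theorem vfDistSq_robust_to_small_deformations
    {n : ℕ} (hn : 1 ≤ n) (σx σt : ℝ) (hσx : 0 < σx) (hσt : 0 < σt)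
    (L₁ L₂ : ℝ) (hL₁ : 0 < L₁) (hL₂ : 0 < L₂)
    (X X' Y Y' : ℝ → EuclideanSpace ℝ (Fin n))
    (hXderiv : ∀ s ∈ Icc (0:ℝ) L₁, HasDerivWithinAt X (X' s) (Icc 0 L₁) s)
    (hYderiv : ∀ t ∈ Icc (0:ℝ) L₂, HasDerivWithinAt Y (Y' t) (Icc 0 L₂) t)
    (hXcont : ContinuousOn X' (Icc 0 L₁))
    (hYcont : ContinuousOn Y' (Icc 0 L₂))
    (hXreg : ∀ s ∈ Icc (0:ℝ) L₁, 0 < ‖X' s‖)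
    (hYreg : ∀ t ∈ Icc (0:ℝ) L₂, 0 < ‖Y' t‖) :
    ∀ ε : ℝ, 0 < ε → ∃ δ : ℝ, 0 < δ ∧ δ < 1 ∧
      ∀ φ : EuclideanSpace ℝ (Fin n) → EuclideanSpace ℝ (Fin n), ContDiff ℝ 1 φ →
        (∀ x, ‖φ x - x‖ < δ) →
        (∀ x, ‖fderiv ℝ φ x - ContinuousLinearMap.id ℝ (EuclideanSpace ℝ (Fin n))‖ < δ) →
        |vfDistSq σx σt L₁ L₂ X X' (fun t => φ (Y t)) (fun t => fderiv ℝ φ (Y t) (Y' t))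
          - vfDistSq σx σt L₁ L₂ X X' Y Y'| < ε :=
  vfDistSq_robust_to_small_deformations_general σx σt L₁ L₂ hL₁ hL₂ X X' Y Y' hXderiv hYderiv hXcont
    hYcont hXreg hYreg
end
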